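/- For every natural number n and complex number z, |j_n(z)| ≤ √π·|z/2|^n·e^{|Im z|}/Γ(n+3/2), where j_n is the spherical Bessel function of order n. -/

import Mathlib

/-!
Poisson's integral: expanding `cos (z t)` in its power series and integrating term by term,
`z ^ n / (2 ^ n n!) ∫₀¹ cos (z t) (1 - t²)ⁿ dt` reproduces the defining series of `sphj n z`,
because the moments `∫₀¹ t^(2k) (1 - t²)ⁿ dt = Γ(k + 1/2) n! / (2 Γ(k + n + 3/2))` follow from an
integration by parts in `n`. On `[0, 1]` we have `‖cos (z t)‖ ≤ exp |Im z|`, and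
`∫₀¹ (1 - t²)ⁿ dt = √π n! / (2 Γ(n + 3/2))`, which gives the bound with an extra factor `1/2`.
-/

/-- Spherical Bessel function of the first kind of order n, as an entire function,
defined via its power series. -/
noncomputable def sphj (n : ℕ) (z : ℂ) : ℂ :=
  ((Real.sqrt Real.pi / 2 : ℝ) : ℂ) *
    ∑' k : ℕ, ((-1) ^ k / ((Nat.factorial k : ℂ) * Complex.Gamma ((k : ℂ) + n + 3 / 2))) *
      (z / 2) ^ (2 * k + n)

open Real intervalIntegral Nat

theorem Real.Gamma_nat_add_half_eq (k : ℕ) :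
    Gamma (k + 1 / 2) = √π * (2 * k)! / (4 ^ k * k !) := by
  rw [eq_div_iff (by positivity)]
  induction k with
  | zero => simpa using Gamma_one_half_eq
  | succ k ih =>
    rw [Nat.cast_succ, add_right_comm, Gamma_add_one (by positivity), Nat.mul_succ,
      Nat.factorial_succ, Nat.factorial_succ, Nat.factorial_succ]
    push_cast
    linear_combination (4 * ((k : ℝ) + 1 / 2) * (k + 1)) * ih

theorem Complex.norm_cos_le_exp_abs_im (w : ℂ) : ‖Complex.cos w‖ ≤ Real.exp |w.im| := by
  have h : ∀ u : ℂ, |u.re| ≤ |w.im| → ‖Complex.exp u‖ ≤ Real.exp |w.im| := fun u hu ↦ by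
    rw [Complex.norm_exp]; exact Real.exp_le_exp.2 ((le_abs_self _).trans hu)
  have h₁ := h (w * I) (by simp)
  have h₂ := h (-w * I) (by simp)
  rw [Complex.cos, norm_div, Complex.norm_two]
  linarith [norm_add_le (Complex.exp (w * I)) (Complex.exp (-w * I))]

theorem one_sub_sq_nonneg_of_abs_le_one {t : ℝ} (ht : |t| ≤ 1) : 0 ≤ 1 - t ^ 2 :=
  sub_nonneg.2 (sq_le_one_iff_abs_le_one t |>.2 ht)

theorem norm_one_sub_sq_pow {t : ℝ} (ht : |t| ≤ 1) (n : ℕ) :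
    ‖(1 - (t : ℂ) ^ 2) ^ n‖ = (1 - t ^ 2) ^ n := by
  rw [← Complex.ofReal_one, ← Complex.ofReal_pow, ← Complex.ofReal_sub, ← Complex.ofReal_pow,
    Complex.norm_real, norm_of_nonneg (pow_nonneg (one_sub_sq_nonneg_of_abs_le_one ht) n)]

theorem integral_pow_mul_one_sub_sq_pow_succ (k n : ℕ) :
    (2 * k + 1 : ℝ) * ∫ t in (0 : ℝ)..1, t ^ (2 * k) * (1 - t ^ 2) ^ (n + 1) =
      2 * (n + 1 : ℝ) * ∫ t in (0 : ℝ)..1, t ^ (2 * (k + 1)) * (1 - t ^ 2) ^ n := by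
  have hderiv : ∀ t : ℝ, HasDerivAt (fun t ↦ t ^ (2 * k + 1) * (1 - t ^ 2) ^ (n + 1))
      ((2 * k + 1) * (t ^ (2 * k) * (1 - t ^ 2) ^ (n + 1))
        - 2 * (n + 1) * (t ^ (2 * (k + 1)) * (1 - t ^ 2) ^ n)) t := fun t ↦ by
    refine ((hasDerivAt_pow (2 * k + 1) t).fun_mul
      (((hasDerivAt_pow 2 t).const_sub 1).fun_pow (n + 1))).congr_deriv ?_
    simp only [Nat.add_sub_cancel]
    push_cast
    ring
  have hint : ∀ m l : ℕ,
      IntervalIntegrable (fun t : ℝ ↦ t ^ m * (1 - t ^ 2) ^ l) MeasureTheory.volume 0 1 :=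
    fun m l ↦ (by fun_prop : Continuous _).intervalIntegrable _ _
  have h := integral_eq_sub_of_hasDerivAt (fun t _ ↦ hderiv t)
    (((hint _ _).const_mul _).sub ((hint _ _).const_mul _))
  rw [integral_sub ((hint _ _).const_mul _) ((hint _ _).const_mul _), integral_const_mul,
    integral_const_mul] at h
  norm_num at h
  linarith

theorem integral_pow_mul_one_sub_sq_pow (k n : ℕ) :
    ∫ t in (0 : ℝ)..1, t ^ (2 * k) * (1 - t ^ 2) ^ n =
      Gamma (k + 1 / 2) * n ! / (2 * Gamma (k + n + 3 / 2)) := by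
  induction n generalizing k with
  | zero =>
    rw [show (k : ℝ) + (0 : ℕ) + 3 / 2 = k + 1 / 2 + 1 by push_cast; ring,
      Gamma_add_one (by positivity)]
    simp [integral_pow]
    field_simp
  | succ n ih =>
    have h := integral_pow_mul_one_sub_sq_pow_succ k n
    rw [ih, Nat.cast_succ, show (k : ℝ) + 1 + 1 / 2 = k + 1 / 2 + 1 by ring,
      Gamma_add_one (by positivity),
      show (k : ℝ) + 1 + n + 3 / 2 = k + (n + 1) + 3 / 2 by ring] at h
    have : (2 * k + 1 : ℝ) ≠ 0 := by positivity
    rw [Nat.factorial_succ, Nat.cast_succ]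
    field_simp at h ⊢
    push_cast
    linear_combination h

theorem integral_one_sub_sq_pow (n : ℕ) :
    ∫ t in (0 : ℝ)..1, (1 - t ^ 2) ^ n = √π * n ! / (2 * Gamma (n + 3 / 2)) := by
  simpa [-one_div, Gamma_one_half_eq] using integral_pow_mul_one_sub_sq_pow 0 n

theorem norm_cos_term_mul_le (n k : ℕ) (z : ℂ) {t : ℝ} (ht : |t| ≤ 1) :
    ‖(-1) ^ k * (z * t) ^ (2 * k) / (2 * k)! * (1 - (t : ℂ) ^ 2) ^ n‖ ≤
      ‖z‖ ^ (2 * k) / (2 * k)! := by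
  have hzt : ‖z * t‖ ≤ ‖z‖ := by
    rw [norm_mul, Complex.norm_real, norm_eq_abs]
    exact mul_le_of_le_one_right (norm_nonneg z) ht
  have hsq := one_sub_sq_nonneg_of_abs_le_one ht
  rw [norm_mul, norm_div, norm_mul, norm_pow, norm_pow, norm_neg, norm_one, one_pow, one_mul,
    Complex.norm_natCast, norm_one_sub_sq_pow ht]
  calc _ ≤ ‖z‖ ^ (2 * k) / (2 * k)! * 1 :=
        mul_le_mul (by gcongr) (pow_le_one₀ hsq (by linarith [sq_nonneg t])) (by positivity)
          (by positivity)
    _ = _ := mul_one _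

theorem integral_cos_term_mul (n k : ℕ) (z : ℂ) :
    ∫ t in (0 : ℝ)..1, (-1) ^ k * (z * t) ^ (2 * k) / (2 * k)! * (1 - (t : ℂ) ^ 2) ^ n =
      (-1) ^ k * z ^ (2 * k) / (2 * k)! *
        ((∫ t in (0 : ℝ)..1, t ^ (2 * k) * (1 - t ^ 2) ^ n : ℝ) : ℂ) := by
  rw [← intervalIntegral.integral_ofReal, ← integral_const_mul]
  congr 1 with t
  push_cast
  ring

theorem hasSum_integral_cos_mul_one_sub_sq_pow (n : ℕ) (z : ℂ) :
    HasSum (fun k ↦ (-1) ^ k * z ^ (2 * k) / (2 * k)! *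
        ((∫ t in (0 : ℝ)..1, t ^ (2 * k) * (1 - t ^ 2) ^ n : ℝ) : ℂ))
      (∫ t in (0 : ℝ)..1, Complex.cos (z * t) * (1 - (t : ℂ) ^ 2) ^ n) := by
  simp_rw [← integral_cos_term_mul]
  refine hasSum_integral_of_dominated_convergence (fun k _ ↦ ‖z‖ ^ (2 * k) / (2 * k)!)
    (fun k ↦ (by fun_prop : Continuous _).aestronglyMeasurable) (fun k ↦ ?_)
    (.of_forall fun _ _ ↦ (Real.hasSum_cosh ‖z‖).summable) intervalIntegrable_const
    (.of_forall fun t _ ↦ (Complex.hasSum_cos (z * t)).mul_right _)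
  refine .of_forall fun t ht ↦ norm_cos_term_mul_le n k z ?_
  rw [Set.uIoc_of_le zero_le_one] at ht
  exact abs_le.2 ⟨by linarith [ht.1], ht.2⟩

theorem sphj_term_eq (n k : ℕ) (z : ℂ) :
    ((√π / 2 : ℝ) : ℂ) * ((-1) ^ k / ((k ! : ℂ) * Complex.Gamma ((k : ℂ) + n + 3 / 2)) *
      (z / 2) ^ (2 * k + n)) =
    z ^ n / (2 ^ n * n !) * ((-1) ^ k * z ^ (2 * k) / (2 * k)! *
      ((∫ t in (0 : ℝ)..1, t ^ (2 * k) * (1 - t ^ 2) ^ n : ℝ) : ℂ)) := by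
  rw [integral_pow_mul_one_sub_sq_pow, Gamma_nat_add_half_eq,
    show (k : ℂ) + n + 3 / 2 = ((k + n + 3 / 2 : ℝ) : ℂ) by push_cast; ring, Complex.Gamma_ofReal]
  have hG : (Gamma (k + n + 3 / 2) : ℂ) ≠ 0 :=
    Complex.ofReal_ne_zero.2 (Gamma_pos_of_pos (by positivity)).ne'
  have h2k : ((2 * k)! : ℂ) ≠ 0 := by exact_mod_cast factorial_ne_zero _
  have hn : (n ! : ℂ) ≠ 0 := by exact_mod_cast factorial_ne_zero _
  push_cast
  field_simp
  rw [div_pow, pow_add 2, pow_mul, show (2 : ℂ) ^ 2 = 4 by norm_num]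
  field_simp
  ring

theorem sphj_eq_integral (n : ℕ) (z : ℂ) :
    sphj n z = z ^ n / (2 ^ n * n !) *
      ∫ t in (0 : ℝ)..1, Complex.cos (z * t) * (1 - (t : ℂ) ^ 2) ^ n := by
  rw [sphj, ← tsum_mul_left, ← ((hasSum_integral_cos_mul_one_sub_sq_pow n z).mul_left _).tsum_eq]
  exact tsum_congr (sphj_term_eq n · z)

theorem norm_integral_cos_mul_one_sub_sq_pow_le (n : ℕ) (z : ℂ) :
    ‖∫ t in (0 : ℝ)..1, Complex.cos (z * t) * (1 - (t : ℂ) ^ 2) ^ n‖ ≤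
      Real.exp |z.im| * ∫ t in (0 : ℝ)..1, (1 - t ^ 2) ^ n := by
  rw [← integral_const_mul]
  refine norm_integral_le_of_norm_le zero_le_one (.of_forall fun t ht ↦ ?_)
    ((by fun_prop : Continuous _).intervalIntegrable _ _)
  have ht' : |t| ≤ 1 := abs_le.2 ⟨by linarith [ht.1], ht.2⟩
  rw [norm_mul, norm_one_sub_sq_pow ht']
  refine mul_le_mul_of_nonneg_right ?_ (pow_nonneg (one_sub_sq_nonneg_of_abs_le_one ht') n)
  refine (Complex.norm_cos_le_exp_abs_im _).trans (Real.exp_le_exp.2 ?_)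
  rw [Complex.im_mul_ofReal, abs_mul]
  exact mul_le_of_le_one_right (abs_nonneg _) ht'

theorem sphj_bound (n : ℕ) (z : ℂ) :
    ‖sphj n z‖ ≤ Real.sqrt Real.pi * (‖z‖ / 2) ^ n * Real.exp |z.im| /
      Real.Gamma ((n : ℝ) + 3 / 2) := by
  have hG : 0 < Gamma (n + 3 / 2) := Gamma_pos_of_pos (by positivity)
  rw [sphj_eq_integral, norm_mul]
  calc _ ≤ ‖z‖ ^ n / (2 ^ n * n !) * (Real.exp |z.im| * ∫ t in (0 : ℝ)..1, (1 - t ^ 2) ^ n) := by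
        gcongr
        · simp
        · exact norm_integral_cos_mul_one_sub_sq_pow_le n z
    _ = √π * (‖z‖ / 2) ^ n * Real.exp |z.im| / Gamma (n + 3 / 2) / 2 := by
        rw [integral_one_sub_sq_pow, div_pow]
        field_simp
    _ ≤ _ := div_le_self (by positivity) one_le_two
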